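/- (Genuine N-body entanglement) Let N ≥ 2 and for each pair a < b in {1,…,N} let Φ_{ab} = φ_{ab}(0,1) + φ_{ab}(1,0) − φ_{ab}(0,0) − φ_{ab}(1,1) be the signed entangling phase, and let ψ_t be the time-evolved N-body state. Let G be the simple graph on the vertex set {1,…,N} with an edge between a and b exactly when Φ_{ab} ≠ 0. Then G is connected if and only if there exists t > 0 such that for every subset S ⊆ {1,…,N} with S nonempty and S ≠ {1,…,N}, the reduced density matrix ρ_S(t) is mixed, i.e. Σ_{x,y}|ρ_S(t)_{xy}|² < 1 (equivalently, the I-concurrence across the bipartition S|Sᶜ is strictly positive). In other words, the time evolution leads to genuine N-body entanglement if and only if the graph representing the system is connected. -/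

import Mathlib

open Real

/-- Combine an assignment `x` of bits to the qubits in `S` with an assignment
`j` of bits to the qubits in `Sᶜ` into a full bit string. -/
def QGEM.merge {N : ℕ} (S : Finset (Fin N)) (x : {i : Fin N // i ∈ S} → Fin 2)
    (j : {i : Fin N // i ∈ Sᶜ} → Fin 2) : Fin N → Fin 2 :=
  fun i => if h : i ∈ S then x ⟨i, h⟩ else j ⟨i, Finset.mem_compl.mpr h⟩

/-!
Every entry of `ρ_S(t)` is `2^{-N}` times a sum of `2^{|Sᶜ|}` unimodular numbers
`exp (i t (φ(x ∪ j) - φ(y ∪ j)))`, so `Tr ρ_S² ≤ 1`, with equality exactly when each of these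
phases is independent of `j` modulo `2π`. Changing `j` to `j'` changes the phase by `t` times a
sum over the pairs with `p ∈ S`, `q ∉ S` (or vice versa) of `-Φ_pq (x_p - y_p) (j_q - j'_q)`. If the graph is disconnected, a connected component `S` is crossed by no such pair, so
`ρ_S(t)` is pure for every `t`. If it is connected, every `S` is crossed by an edge `ab`, and
flipping `a` in `x` and `b` in `j` changes the phase by `±t Φ_ab`, which is not a multiple of `2π`
once `0 < t |Φ_pq| < 2π` for all pairs.
-/

open Finset

lemma SimpleGraph.connected_iff_forall_exists_adj {V : Type*} [Fintype V] [Nonempty V]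
    (G : SimpleGraph V) :
    G.Connected ↔ ∀ S : Finset V, S.Nonempty → S ≠ univ → ∃ a ∈ S, ∃ b ∉ S, G.Adj a b := by
  classical
  refine ⟨fun hG S ⟨u, hu⟩ hS => ?_, fun h => ⟨fun u v => ?_⟩⟩
  · obtain ⟨v, hv⟩ := not_forall.1 (mt eq_univ_iff_forall.2 hS)
    obtain ⟨d, -, hd, hd'⟩ := (hG u v).some.exists_boundary_dart (S : Set V) hu hv
    exact ⟨d.fst, hd, d.snd, hd', d.adj⟩
  · by_contra huv
    obtain ⟨a, ha, b, hb, hab⟩ := h ({w | G.Reachable u w} : Finset V) ⟨u, by simp⟩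
      (ne_of_mem_of_not_mem' (mem_univ v) (by simpa using huv)).symm
    simp only [mem_filter, mem_univ, true_and] at ha hb
    exact hb (ha.trans hab.reachable)

section NormSum

variable {ι E : Type*} [Fintype ι] [NormedAddCommGroup E] {z : ι → E} {r : ℝ}

lemma norm_sum_le_card_mul (hz : ∀ i, ‖z i‖ = r) : ‖∑ i, z i‖ ≤ Fintype.card ι * r := by
  simpa [hz] using norm_sum_le univ z

lemma norm_sum_eq_card_mul_iff [NormedSpace ℝ E] [StrictConvexSpace ℝ E] (hz : ∀ i, ‖z i‖ = r) :
    ‖∑ i, z i‖ = Fintype.card ι * r ↔ ∀ i j, z i = z j := by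
  constructor
  · intro h i j
    by_contra hij
    have hcard : (0 : ℝ) < Fintype.card ι := by exact_mod_cast Fintype.card_pos_iff.2 ⟨i⟩
    have hlt := norm_sum_lt_of_strictConvexSpace (t := univ)
      (w := fun _ => (Fintype.card ι : ℝ)⁻¹) (fun _ _ => by positivity) (by simp [hcard.ne'])
      (mem_univ i) (mem_univ j) hij (inv_ne_zero hcard.ne') (inv_ne_zero hcard.ne')
      (fun k _ => (hz k).le)
    rw [← smul_sum, norm_smul, h, norm_inv, Real.norm_natCast,
      inv_mul_cancel_left₀ hcard.ne'] at hlt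
    exact hlt.false
  · intro h
    cases isEmpty_or_nonempty ι with
    | inl _ => simp
    | inr hne =>
      obtain ⟨i₀⟩ := hne
      rw [sum_congr rfl fun i _ => h i i₀, sum_const, card_univ, RCLike.norm_nsmul ℝ, hz,
        nsmul_eq_mul]

end NormSum

lemma Complex.exp_I_mul_ne_of_abs_sub_lt {θ θ' : ℝ} (hne : θ ≠ θ') (hlt : |θ - θ'| < 2 * π) :
    exp (I * θ) ≠ exp (I * θ') := by
  intro h
  obtain ⟨n, hn⟩ := exp_eq_exp_iff_exists_int.1 h
  have hθ : θ - θ' = n * (2 * π) := by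
    have : ((θ - θ' : ℝ) : ℂ) = ((n * (2 * π) : ℝ) : ℂ) := by
      apply mul_left_cancel₀ I_ne_zero
      push_cast
      linear_combination hn
    exact_mod_cast this
  have hn0 : n = 0 := by
    rw [hθ, abs_mul, abs_of_pos two_pi_pos, mul_lt_iff_lt_one_left two_pi_pos] at hlt
    exact Int.abs_lt_one_iff.1 (by exact_mod_cast hlt)
  rw [hn0, Int.cast_zero, zero_mul, sub_eq_zero] at hθ
  exact hne hθ

lemma exists_pos_forall_mul_abs_lt {ι : Type*} [Finite ι] (a : ι → ℝ) {ε : ℝ} (hε : 0 < ε) :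
    ∃ t > 0, ∀ i, t * |a i| < ε := by
  have : ∀ᶠ t in nhdsWithin (0 : ℝ) (Set.Ioi 0), ∀ i, t * |a i| < ε :=
    Filter.eventually_all.2 fun i => nhdsWithin_le_nhds <|
      ((continuous_id.mul continuous_const).tendsto' 0 0 (by simp)).eventually (gt_mem_nhds hε)
  obtain ⟨t, ht, ht0⟩ := (this.and self_mem_nhdsWithin).exists
  exact ⟨t, ht0, ht⟩

namespace QGEM

/-- `Tr ρ²` for the reduced state on `X` of the vector `u` on `X × Y`. -/
noncomputable def purity {X Y : Type*} [Fintype X] [Fintype Y] (u : X → Y → ℂ) : ℝ :=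
  ∑ x, ∑ y, ‖∑ j, u x j * starRingEnd ℂ (u y j)‖ ^ 2

lemma purity_lt_iff {X Y : Type*} [Fintype X] [Fintype Y] {u : X → Y → ℂ} {c : ℝ}
    (hu : ∀ x j, ‖u x j‖ = c) :
    purity u < (Fintype.card X * Fintype.card Y * c ^ 2) ^ 2 ↔
      ∃ x y j j', u x j * starRingEnd ℂ (u y j) ≠ u x j' * starRingEnd ℂ (u y j') := by
  set B : ℝ := (Fintype.card Y * c ^ 2) ^ 2
  have hterm : ∀ x y j, ‖u x j * starRingEnd ℂ (u y j)‖ = c ^ 2 := by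
    intro x y j
    rw [norm_mul, Complex.norm_conj, hu, hu, sq]
  have hle : ∀ x y, ‖∑ j, u x j * starRingEnd ℂ (u y j)‖ ^ 2 ≤ B :=
    fun x y => pow_le_pow_left₀ (norm_nonneg _) (norm_sum_le_card_mul (hterm x y)) 2
  have heq : ∀ x y, ‖∑ j, u x j * starRingEnd ℂ (u y j)‖ ^ 2 = B ↔
      ∀ j j', u x j * starRingEnd ℂ (u y j) = u x j' * starRingEnd ℂ (u y j') := by
    intro x y
    rw [sq_eq_sq₀ (norm_nonneg _) (by positivity), norm_sum_eq_card_mul_iff (hterm x y)]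
  have hrow : ∀ x, ∑ y, ‖∑ j, u x j * starRingEnd ℂ (u y j)‖ ^ 2 ≤ ∑ _y : X, B :=
    fun x => sum_le_sum fun y _ => hle x y
  have hbound : (Fintype.card X * Fintype.card Y * c ^ 2 : ℝ) ^ 2 = ∑ _x : X, ∑ _y : X, B := by
    simp only [B, sum_const, card_univ, nsmul_eq_mul]
    ring
  rw [hbound, purity, lt_iff_le_and_ne, Ne, sum_eq_sum_iff_of_le fun x _ => hrow x]
  simp only [sum_eq_sum_iff_of_le fun y _ => hle _ y, mem_univ, forall_const, heq]
  push Not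
  exact and_iff_right (sum_le_sum fun x _ => hrow x)

lemma purity_merge_lt_one_iff {N : ℕ} {phiJ : (Fin N → Fin 2) → ℝ} {ψ : ℝ → (Fin N → Fin 2) → ℂ}
    (hψ : ∀ t J, ψ t J = Complex.ofReal (1 / Real.sqrt (2 ^ N)) *
      Complex.exp (Complex.I * Complex.ofReal (t * phiJ J)))
    (t : ℝ) (S : Finset (Fin N)) :
    purity (fun x j => ψ t (merge S x j)) < 1 ↔
      ∃ x y j j', Complex.exp (Complex.I * (t * (phiJ (merge S x j) - phiJ (merge S y j)) : ℝ)) ≠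
        Complex.exp (Complex.I * (t * (phiJ (merge S x j') - phiJ (merge S y j')) : ℝ)) := by
  have hnorm : ∀ J, ‖ψ t J‖ = 1 / Real.sqrt (2 ^ N) := by
    intro J
    rw [hψ, norm_mul, mul_comm Complex.I, Complex.norm_exp_ofReal_mul_I, mul_one,
      Complex.norm_of_nonneg (by positivity)]
  have hprod : ∀ J K, ψ t J * starRingEnd ℂ (ψ t K) =
      (1 / 2 ^ N : ℂ) * Complex.exp (Complex.I * (t * (phiJ J - phiJ K) : ℝ)) := by
    intro J K
    rw [hψ, hψ, map_mul, Complex.conj_ofReal, ← Complex.exp_conj, map_mul, Complex.conj_I,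
      Complex.conj_ofReal, mul_mul_mul_comm, ← Complex.exp_add, ← Complex.ofReal_mul,
      ← sq, div_pow, one_pow, Real.sq_sqrt (by positivity)]
    push_cast
    ring_nf
  have hcard : (Fintype.card ({i // i ∈ S} → Fin 2) * Fintype.card ({i // i ∈ Sᶜ} → Fin 2) *
      (1 / Real.sqrt (2 ^ N)) ^ 2 : ℝ) = 1 := by
    simp only [Fintype.card_fun, Fintype.card_coe, Fintype.card_fin, div_pow, one_pow,
      Real.sq_sqrt (by positivity : (0 : ℝ) ≤ 2 ^ N)]
    push_cast
    rw [← pow_add, card_add_card_compl, Fintype.card_fin]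
    field_simp
  have hlt := purity_lt_iff (fun x j => hnorm (merge S x j))
  rw [hcard, one_pow] at hlt
  simp only [hlt, hprod, ne_eq, mul_right_inj' (by simp : (1 / 2 ^ N : ℂ) ≠ 0)]

def entanglingPhase (f : Fin 2 → Fin 2 → ℝ) : ℝ := f 0 1 + f 1 0 - f 0 0 - f 1 1

lemma sub_sub_sub_eq_neg_mul_entanglingPhase (f : Fin 2 → Fin 2 → ℝ) (a b c d : Fin 2) :
    f a c - f b c - (f a d - f b d) = -(((a : ℝ) - b) * ((c : ℝ) - d)) * entanglingPhase f := by
  unfold entanglingPhase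
  fin_cases a <;> fin_cases b <;> fin_cases c <;> fin_cases d <;> norm_num <;> ring

variable {N : ℕ}

def pairPhase (φ : Fin N → Fin N → Fin 2 → Fin 2 → ℝ) (J : Fin N → Fin 2) : ℝ :=
  ∑ p, ∑ q, if p < q then φ p q (J p) (J q) else 0

def interactionGraph (φ : Fin N → Fin N → Fin 2 → Fin 2 → ℝ) : SimpleGraph (Fin N) :=
  SimpleGraph.fromRel fun a b => a < b ∧ entanglingPhase (φ a b) ≠ 0

def bitDiff (J K : Fin N → Fin 2) (i : Fin N) : ℝ := (J i : ℝ) - K i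

section Merge

variable (S : Finset (Fin N)) (x y : {i // i ∈ S} → Fin 2) (j j' : {i // i ∈ Sᶜ} → Fin 2)

-- `bitDiff (merge S x j) (merge S y j)` vanishes off `S` and `bitDiff (merge S x j) (merge S x j')`
-- vanishes on `S`, so only pairs with exactly one point in `S` contribute.
lemma merge_mixedDiff (f : Fin 2 → Fin 2 → ℝ) (p q : Fin N) :
    f (merge S x j p) (merge S x j q) - f (merge S y j p) (merge S y j q)
      - (f (merge S x j' p) (merge S x j' q) - f (merge S y j' p) (merge S y j' q)) =
    -(bitDiff (merge S x j) (merge S y j) p * bitDiff (merge S x j) (merge S x j') q +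
      bitDiff (merge S x j) (merge S x j') p * bitDiff (merge S x j) (merge S y j) q) *
      entanglingPhase f := by
  by_cases hp : p ∈ S <;> by_cases hq : q ∈ S <;>
    simp only [merge, bitDiff, hp, hq, dite_true, dite_false, sub_self, zero_mul, mul_zero,
      add_zero, zero_add, neg_zero]
  · exact sub_sub_sub_eq_neg_mul_entanglingPhase f _ _ _ _
  · linear_combination sub_sub_sub_eq_neg_mul_entanglingPhase f
      (j ⟨p, mem_compl.2 hp⟩) (j' ⟨p, mem_compl.2 hp⟩) (x ⟨q, hq⟩) (y ⟨q, hq⟩)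

variable (φ : Fin N → Fin N → Fin 2 → Fin 2 → ℝ)

lemma pairPhase_merge_mixedDiff :
    pairPhase φ (merge S x j) - pairPhase φ (merge S y j)
      - (pairPhase φ (merge S x j') - pairPhase φ (merge S y j')) =
    -∑ p, ∑ q, if p < q then
      (bitDiff (merge S x j) (merge S y j) p * bitDiff (merge S x j) (merge S x j') q +
        bitDiff (merge S x j) (merge S x j') p * bitDiff (merge S x j) (merge S y j) q) *
        entanglingPhase (φ p q) else 0 := by
  simp only [pairPhase, ← sum_sub_distrib, ← sum_neg_distrib]
  refine sum_congr rfl fun p _ => sum_congr rfl fun q _ => ?_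
  split_ifs
  · rw [merge_mixedDiff, neg_mul]
  · simp

lemma pairPhase_merge_sub_eq_of_forall_not_adj
    (h : ∀ a ∈ S, ∀ b ∉ S, ¬ (interactionGraph φ).Adj a b) :
    pairPhase φ (merge S x j) - pairPhase φ (merge S y j) =
      pairPhase φ (merge S x j') - pairPhase φ (merge S y j') := by
  rw [← sub_eq_zero, pairPhase_merge_mixedDiff, neg_eq_zero]
  refine sum_eq_zero fun p _ => sum_eq_zero fun q _ => ?_
  split_ifs with hpq
  · by_cases hΦ : entanglingPhase (φ p q) = 0
    · rw [hΦ, mul_zero]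
    · have hadj : (interactionGraph φ).Adj p q :=
        (SimpleGraph.fromRel_adj _ _ _).2 ⟨hpq.ne, .inl ⟨hpq, hΦ⟩⟩
      by_cases hp : p ∈ S
      · have hq : q ∈ S := by_contra fun hq => h p hp q hq hadj
        simp [merge, bitDiff, hp, hq]
      · have hq : q ∉ S := fun hq => h q hq p hp hadj.symm
        simp [merge, bitDiff, hp, hq]
  · rfl

end Merge

lemma exists_pairPhase_merge_mixedDiff_eq (φ : Fin N → Fin N → Fin 2 → Fin 2 → ℝ)
    {S : Finset (Fin N)} {a b p q : Fin N} (ha : a ∈ S) (hb : b ∉ S) (hpq : p < q)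
    (hab : p = a ∧ q = b ∨ p = b ∧ q = a) :
    ∃ x y j j', pairPhase φ (merge S x j) - pairPhase φ (merge S y j)
      - (pairPhase φ (merge S x j') - pairPhase φ (merge S y j')) = -entanglingPhase (φ p q) := by
  let x : {i // i ∈ S} → Fin 2 := fun _ => 0
  let y : {i // i ∈ S} → Fin 2 := fun i => if (i : Fin N) = a then 1 else 0
  let j : {i // i ∈ Sᶜ} → Fin 2 := fun _ => 0
  let j' : {i // i ∈ Sᶜ} → Fin 2 := fun i => if (i : Fin N) = b then 1 else 0
  refine ⟨x, y, j, j', ?_⟩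
  have hδ : ∀ i, bitDiff (merge S x j) (merge S y j) i = -if i = a then 1 else 0 := by
    intro i
    by_cases hi : i ∈ S
    · by_cases hia : i = a <;> simp [bitDiff, merge, x, y, hi, hia, ha]
    · simp [bitDiff, merge, j, hi, show i ≠ a by rintro rfl; exact hi ha]
  have hε : ∀ i, bitDiff (merge S x j) (merge S x j') i = -if i = b then 1 else 0 := by
    intro i
    by_cases hi : i ∈ S
    · simp [bitDiff, merge, x, hi, show i ≠ b by rintro rfl; exact hb hi]
    · by_cases hib : i = b <;> simp [bitDiff, merge, j, j', hi, hib, hb]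
  rw [pairPhase_merge_mixedDiff, neg_inj]
  simp only [hδ, hε]
  rw [Fintype.sum_eq_single p fun p' hp' => sum_eq_zero fun q' _ => by grind,
    Fintype.sum_eq_single q fun q' hq' => by grind]
  grind

lemma exists_exp_merge_ne_of_adj (φ : Fin N → Fin N → Fin 2 → Fin 2 → ℝ) {t : ℝ} (ht : 0 < t)
    (hsmall : ∀ p q, t * |entanglingPhase (φ p q)| < 2 * π)
    {S : Finset (Fin N)} {a b : Fin N} (ha : a ∈ S) (hb : b ∉ S)
    (hab : (interactionGraph φ).Adj a b) :
    ∃ x y j j',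
      Complex.exp (Complex.I * (t * (pairPhase φ (merge S x j) - pairPhase φ (merge S y j)) : ℝ)) ≠
        Complex.exp
          (Complex.I * (t * (pairPhase φ (merge S x j') - pairPhase φ (merge S y j')) : ℝ)) := by
  obtain ⟨p, q, hpq, hΦ, horient⟩ : ∃ p q, p < q ∧ entanglingPhase (φ p q) ≠ 0 ∧
      (p = a ∧ q = b ∨ p = b ∧ q = a) := by
    rcases ((SimpleGraph.fromRel_adj _ _ _).1 hab).2 with ⟨hlt, hne⟩ | ⟨hlt, hne⟩
    exacts [⟨a, b, hlt, hne, .inl ⟨rfl, rfl⟩⟩, ⟨b, a, hlt, hne, .inr ⟨rfl, rfl⟩⟩]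
  obtain ⟨x, y, j, j', hdiff⟩ := exists_pairPhase_merge_mixedDiff_eq φ ha hb hpq horient
  have hθ : t * (pairPhase φ (merge S x j) - pairPhase φ (merge S y j)) -
      t * (pairPhase φ (merge S x j') - pairPhase φ (merge S y j')) =
      -(t * entanglingPhase (φ p q)) := by
    rw [← mul_sub, hdiff, mul_neg]
  refine ⟨x, y, j, j', Complex.exp_I_mul_ne_of_abs_sub_lt (sub_ne_zero.1 ?_) ?_⟩
  · rw [hθ, neg_ne_zero]
    exact mul_ne_zero ht.ne' hΦ
  · rw [hθ, abs_neg, abs_mul, abs_of_pos ht]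
    exact hsmall p q

end QGEM

/-- (Genuine N-body entanglement) The simple graph on the `N` masses whose
edges are the pairs with nonzero signed entangling phase is connected if and
only if there is a time `t > 0` at which, for every nonempty proper subset `S`
of the qubits, the reduced density matrix of `S` is mixed
(`Tr ρ_S(t)² < 1`), i.e. the time evolution leads to genuine N-body
entanglement. -/
theorem genuine_N_body_entanglement_iff_connected (N : ℕ) (hN : 2 ≤ N)
    (φ : Fin N → Fin N → Fin 2 → Fin 2 → ℝ)
    (Φ : Fin N → Fin N → ℝ)
    (hΦ : ∀ a b, Φ a b = φ a b 0 1 + φ a b 1 0 - φ a b 0 0 - φ a b 1 1)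
    (phiJ : (Fin N → Fin 2) → ℝ)
    (hphiJ : ∀ J, phiJ J = ∑ p, ∑ q, if p < q then φ p q (J p) (J q) else 0)
    (ψ : ℝ → (Fin N → Fin 2) → ℂ)
    (hψ : ∀ t J, ψ t J = Complex.ofReal (1 / Real.sqrt (2 ^ N)) *
      Complex.exp (Complex.I * Complex.ofReal (t * phiJ J))) :
    (SimpleGraph.fromRel (fun a b => a < b ∧ Φ a b ≠ 0)).Connected ↔
      ∃ t : ℝ, 0 < t ∧ ∀ S : Finset (Fin N), S.Nonempty → S ≠ Finset.univ →
        ∑ x : {i : Fin N // i ∈ S} → Fin 2,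
          ∑ y : {i : Fin N // i ∈ S} → Fin 2,
            ‖∑ j : {i : Fin N // i ∈ Sᶜ} → Fin 2,
              ψ t (QGEM.merge S x j) *
                (starRingEnd ℂ) (ψ t (QGEM.merge S y j))‖ ^ 2 < 1 := by
  obtain rfl : phiJ = QGEM.pairPhase φ := funext hphiJ
  obtain rfl : Φ = fun a b => QGEM.entanglingPhase (φ a b) := funext₂ hΦ
  have : Nonempty (Fin N) := ⟨⟨0, by omega⟩⟩
  change (QGEM.interactionGraph φ).Connected ↔ ∃ t : ℝ, 0 < t ∧ ∀ S : Finset (Fin N),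
    S.Nonempty → S ≠ univ → QGEM.purity (fun x j => ψ t (QGEM.merge S x j)) < 1
  simp only [QGEM.purity_merge_lt_one_iff hψ, SimpleGraph.connected_iff_forall_exists_adj]
  constructor
  · intro hG
    obtain ⟨t, ht, hsmall⟩ := exists_pos_forall_mul_abs_lt
      (fun e : Fin N × Fin N => QGEM.entanglingPhase (φ e.1 e.2)) two_pi_pos
    refine ⟨t, ht, fun S hS hSu => ?_⟩
    obtain ⟨a, ha, b, hb, hab⟩ := hG S hS hSu
    exact QGEM.exists_exp_merge_ne_of_adj φ ht (fun p q => hsmall (p, q)) ha hb hab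
  · rintro ⟨t, -, h⟩ S hS hSu
    by_contra! hcut
    obtain ⟨x, y, j, j', hne⟩ := h S hS hSu
    exact hne (by rw [QGEM.pairPhase_merge_sub_eq_of_forall_not_adj S x y j j' φ hcut])
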